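/- Let ℓ be an odd prime and let l₁, l₂ ∈ 𝔰𝔩₂(ℤ_ℓ), λ₁, λ₂ ∈ ℤ_ℓ, M ∈ GL₂(ℚ_ℓ) ∩ M₂(ℤ_ℓ), and T ≥ 1. Suppose: (i) l₂ ≡ M l₁ M^{−1} (mod ℓ^T); (ii) tr(l₁²) ≡ tr(l₂²) (mod ℓ^T); (iii) the element (Θ(l₁²) + 2λ₁l₁, Θ(l₂²) + 2λ₂l₂) satisfies Θ(l₂²) + 2λ₂l₂ ≡ M(Θ(l₁²) + 2λ₁l₁)M^{−1} (mod ℓ^T), where Θ(x) = x − (tr x)/2·Id; (iv) at least one coordinate of l₂ is not divisible by ℓ. Then λ₁ ≡ λ₂ (mod ℓ^T). -/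

import Mathlib

/-- The trace-zero projection `Θ(x) = x − (tr x / 2)·Id` over `ℚ_ℓ`. -/
noncomputable def thetaQ (p : ℕ) [Fact p.Prime]
    (m : Matrix (Fin 2) (Fin 2) ℚ_[p]) : Matrix (Fin 2) (Fin 2) ℚ_[p] :=
  m - (Matrix.trace m / 2) • (1 : Matrix (Fin 2) (Fin 2) ℚ_[p])

/-- The image in `M₂(ℚ_ℓ)` of an integral matrix. -/
noncomputable def toQ (p : ℕ) [Fact p.Prime]
    (m : Matrix (Fin 2) (Fin 2) ℤ_[p]) : Matrix (Fin 2) (Fin 2) ℚ_[p] :=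
  m.map (fun x => (x : ℚ_[p]))

/-!
Put `C = M l₁ M⁻¹` and `D = l₂ - C`, so `D ≡ 0 (mod ℓ^T)` by (i). Expanding `Θ`, the difference in
(iii) equals `2(λ₂ - λ₁) l₂ + l₂ D + D C + (tr(l₁²) - tr(l₂²))/2 + 2λ₁ D`. Since `l₂`, `λ₁` and
`C = l₂ - D` are integral and `2` is a unit, (i) and (ii) make every term but the first
`≡ 0 (mod ℓ^T)`, hence so is `2(λ₂ - λ₁) l₂`; an entry of `l₂` is a unit, so `ℓ^T ∣ λ₂ - λ₁`.
-/

theorem sq_sub_add_smul_sub_conj {K A : Type*} [CommRing K] [Ring A] [Algebra K A]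
    {N N' : A} (hN : N' * N = 1) (hN' : N * N' = 1) (l₁ l₂ : A) (s₁ s₂ c₁ c₂ : K) :
    l₂ * l₂ - s₂ • 1 + c₂ • l₂ - N * (l₁ * l₁ - s₁ • 1 + c₁ • l₁) * N' =
      (c₂ - c₁) • l₂ + l₂ * (l₂ - N * l₁ * N') + (l₂ - N * l₁ * N') * (N * l₁ * N')
        + (s₁ - s₂) • 1 + c₁ • (l₂ - N * l₁ * N') := by
  have hsq : N * l₁ * N' * (N * l₁ * N') = N * (l₁ * l₁) * N' := by
    rw [show N * l₁ * N' * (N * l₁ * N') = N * l₁ * (N' * N) * l₁ * N' by simp only [mul_assoc],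
      hN, mul_one, mul_assoc N l₁ l₁]
  have hconj : N * (l₁ * l₁ - s₁ • 1 + c₁ • l₁) * N' =
      N * l₁ * N' * (N * l₁ * N') - s₁ • 1 + c₁ • (N * l₁ * N') := by
    rw [hsq]
    simp only [mul_add, add_mul, mul_sub, sub_mul, mul_smul_comm, smul_mul_assoc, mul_one, hN']
  rw [hconj]
  simp only [mul_sub, sub_mul, sub_smul, smul_sub]
  abel

namespace Matrix

section EntrywiseNormLE

variable {R : Type*} [SeminormedRing R] {l m n : Type*}

def EntrywiseNormLE (r : ℝ) (A : Matrix m n R) : Prop :=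
  ∀ i j, ‖A i j‖ ≤ r

theorem EntrywiseNormLE.smul {r : ℝ} {A : Matrix m n R} (hA : A.EntrywiseNormLE r) {c : R} {a : ℝ}
    (hc : ‖c‖ ≤ a) : (c • A).EntrywiseNormLE (a * r) := fun i j =>
  (norm_mul_le _ _).trans (mul_le_mul hc (hA i j) (norm_nonneg _) ((norm_nonneg _).trans hc))

theorem entrywiseNormLE_one [DecidableEq n] [NormOneClass R] :
    (1 : Matrix n n R).EntrywiseNormLE 1 := fun i j => by
  rcases eq_or_ne i j with rfl | h <;> simp [*]

variable [IsUltrametricDist R]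

theorem EntrywiseNormLE.sub {r : ℝ} {A B : Matrix m n R} (hA : A.EntrywiseNormLE r)
    (hB : B.EntrywiseNormLE r) : (A - B).EntrywiseNormLE r := fun i j => by
  rw [sub_apply, sub_eq_add_neg]
  exact (IsUltrametricDist.norm_add_le_max _ _).trans
    (max_le (hA i j) ((norm_neg _).trans_le (hB i j)))

theorem EntrywiseNormLE.mul [Fintype m] {a b : ℝ} {A : Matrix l m R} {B : Matrix m n R}
    (hA : A.EntrywiseNormLE a) (hB : B.EntrywiseNormLE b) (hab : 0 ≤ a * b) :
    (A * B).EntrywiseNormLE (a * b) := fun i j =>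
  IsUltrametricDist.norm_sum_le_of_forall_le_of_nonneg hab fun k _ =>
    (norm_mul_le _ _).trans
      (mul_le_mul (hA i k) (hB k j) (norm_nonneg _) ((norm_nonneg _).trans (hA i k)))

end EntrywiseNormLE

theorem entrywiseNormLE_sub_smul_of_conj {K n : Type*} [SeminormedCommRing K]
    [NormOneClass K] [IsUltrametricDist K] [Fintype n] [DecidableEq n] {N N' l₁ l₂ : Matrix n n K}
    (hN : N' * N = 1) (hN' : N * N' = 1) {s₁ s₂ c₁ c₂ : K} {ε : ℝ} (hε₁ : ε ≤ 1)
    (hl₂ : l₂.EntrywiseNormLE 1) (hc₁ : ‖c₁‖ ≤ 1) (hs : ‖s₁ - s₂‖ ≤ ε)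
    (hl : (l₂ - N * l₁ * N').EntrywiseNormLE ε)
    (hq : (l₂ * l₂ - s₂ • 1 + c₂ • l₂ - N * (l₁ * l₁ - s₁ • 1 + c₁ • l₁) * N').EntrywiseNormLE ε) :
    ((c₂ - c₁) • l₂).EntrywiseNormLE ε := by
  set C := N * l₁ * N'
  set D := l₂ - C
  have hε : 0 ≤ ε := (norm_nonneg _).trans hs
  have hC : C.EntrywiseNormLE 1 := by
    simpa [D] using hl₂.sub fun i j => (hl i j).trans hε₁
  have hl₂D : (l₂ * D).EntrywiseNormLE ε := by simpa using hl₂.mul hl (by simpa using hε)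
  have hDC : (D * C).EntrywiseNormLE ε := by simpa using hl.mul hC (by simpa using hε)
  have hs1 : ((s₁ - s₂) • 1 : Matrix n n K).EntrywiseNormLE ε := by
    simpa using entrywiseNormLE_one.smul hs
  have hc₁D : (c₁ • D).EntrywiseNormLE ε := by simpa using hl.smul hc₁
  rw [sq_sub_add_smul_sub_conj hN hN'] at hq
  convert (((hq.sub hl₂D).sub hDC).sub hs1).sub hc₁D using 1
  abel

end Matrix

section Padic

variable {p : ℕ} [Fact p.Prime]

theorem Padic.norm_two_eq_one (h2 : p ≠ 2) : ‖(2 : ℚ_[p])‖ = 1 := by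
  simpa using Padic.norm_natCast_eq_one_iff.2 ((Nat.coprime_primes Fact.out Nat.prime_two).2 h2)

theorem PadicInt.isUnit_two (h2 : p ≠ 2) : IsUnit (2 : ℤ_[p]) :=
  isUnit_iff.2 <| by
    simpa using norm_natCast_eq_one_iff.2 ((Nat.coprime_primes Fact.out Nat.prime_two).2 h2)

theorem PadicInt.isUnit_of_not_dvd {x : ℤ_[p]} (hx : ¬ (p : ℤ_[p]) ∣ x) : IsUnit x :=
  isUnit_iff.2 (le_antisymm (norm_le_one x) (not_lt.1 (mt (norm_lt_one_iff_dvd x).1 hx)))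

theorem PadicInt.pow_dvd_iff_norm_le (x : ℤ_[p]) (n : ℕ) :
    (p : ℤ_[p]) ^ n ∣ x ↔ ‖x‖ ≤ (p : ℝ) ^ (-n : ℤ) := by
  rw [norm_le_pow_iff_mem_span_pow, Ideal.mem_span_singleton]

theorem toQ_apply (a : Matrix (Fin 2) (Fin 2) ℤ_[p]) (i j : Fin 2) :
    toQ p a i j = (a i j : ℚ_[p]) :=
  rfl

theorem toQ_mul (a b : Matrix (Fin 2) (Fin 2) ℤ_[p]) : toQ p (a * b) = toQ p a * toQ p b :=
  Matrix.map_mul (f := PadicInt.Coe.ringHom)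

theorem trace_toQ (a : Matrix (Fin 2) (Fin 2) ℤ_[p]) :
    (toQ p a).trace = (a.trace : ℚ_[p]) :=
  (AddMonoidHom.map_trace PadicInt.Coe.ringHom a).symm

theorem entrywiseNormLE_one_toQ (a : Matrix (Fin 2) (Fin 2) ℤ_[p]) :
    (toQ p a).EntrywiseNormLE 1 := fun i j =>
  (PadicInt.padic_norm_e_of_padicInt (a i j)).trans_le (PadicInt.norm_le_one _)

theorem norm_half_trace_sq_toQ_sub_le (h2 : p ≠ 2) {a b : Matrix (Fin 2) (Fin 2) ℤ_[p]} {n : ℕ}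
    (h : (p : ℤ_[p]) ^ n ∣ Matrix.trace (a * a) - Matrix.trace (b * b)) :
    ‖Matrix.trace (toQ p a * toQ p a) / 2 - Matrix.trace (toQ p b * toQ p b) / 2‖ ≤
      (p : ℝ) ^ (-n : ℤ) := by
  have h_eq : Matrix.trace (toQ p a * toQ p a) / 2 - Matrix.trace (toQ p b * toQ p b) / 2 =
      ((Matrix.trace (a * a) - Matrix.trace (b * b) : ℤ_[p]) : ℚ_[p]) / 2 := by
    simp only [← toQ_mul, trace_toQ]
    push_cast
    ring
  rwa [h_eq, norm_div, Padic.norm_two_eq_one h2, div_one, PadicInt.padic_norm_e_of_padicInt,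
    ← PadicInt.pow_dvd_iff_norm_le]

theorem pow_dvd_of_entrywiseNormLE_smul_toQ {x : ℤ_[p]} {a : Matrix (Fin 2) (Fin 2) ℤ_[p]}
    {n : ℕ} (ha : ∃ i j, ¬ (p : ℤ_[p]) ∣ a i j)
    (h : ((x : ℚ_[p]) • toQ p a).EntrywiseNormLE (p ^ (-n : ℤ))) :
    (p : ℤ_[p]) ^ n ∣ x := by
  obtain ⟨i, j, hij⟩ := ha
  have hx := h i j
  rw [Matrix.smul_apply, toQ_apply, smul_eq_mul, ← PadicInt.coe_mul,
    PadicInt.padic_norm_e_of_padicInt, ← PadicInt.pow_dvd_iff_norm_le] at hx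
  exact (PadicInt.isUnit_of_not_dvd hij).dvd_mul_right.1 hx

end Padic

theorem lambdas_congruent_general (p : ℕ) [Fact p.Prime] (hp : p ≠ 2) (T : ℕ)
    (l₁ l₂ : Matrix (Fin 2) (Fin 2) ℤ_[p])
    (lam₁ lam₂ : ℤ_[p])
    (M : Matrix (Fin 2) (Fin 2) ℤ_[p]) (hM : (toQ p M).det ≠ 0)
    (hi : ∀ i j, ‖(toQ p l₂ - toQ p M * toQ p l₁ * (toQ p M)⁻¹) i j‖ ≤ (p : ℝ) ^ (-(T : ℤ)))
    (hii : (p : ℤ_[p]) ^ T ∣ (Matrix.trace (l₁ * l₁) - Matrix.trace (l₂ * l₂)))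
    (hiii : ∀ i j, ‖((thetaQ p (toQ p l₂ * toQ p l₂) + ((2 * lam₂ : ℤ_[p]) : ℚ_[p]) • toQ p l₂)
        - toQ p M * (thetaQ p (toQ p l₁ * toQ p l₁) + ((2 * lam₁ : ℤ_[p]) : ℚ_[p]) • toQ p l₁)
            * (toQ p M)⁻¹) i j‖ ≤ (p : ℝ) ^ (-(T : ℤ)))
    (hiv : ∃ i j, ¬ ((p : ℤ_[p]) ∣ l₂ i j)) :
    (p : ℤ_[p]) ^ T ∣ (lam₁ - lam₂) := by
  have hN := isUnit_iff_ne_zero.2 hM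
  have hε₁ : (p : ℝ) ^ (-(T : ℤ)) ≤ 1 :=
    zpow_le_one_of_nonpos₀ (mod_cast (Fact.out : p.Prime).one_le) (by omega)
  unfold thetaQ at hiii
  have hsmall := Matrix.entrywiseNormLE_sub_smul_of_conj (Matrix.nonsing_inv_mul _ hN)
    (Matrix.mul_nonsing_inv _ hN) hε₁ (entrywiseNormLE_one_toQ l₂)
    ((PadicInt.padic_norm_e_of_padicInt _).trans_le (PadicInt.norm_le_one _))
    (norm_half_trace_sq_toQ_sub_le hp hii) hi hiii
  rw [← PadicInt.coe_sub, ← mul_sub] at hsmall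
  exact dvd_sub_comm.1 <|
    (PadicInt.isUnit_two hp).dvd_mul_left.1 (pow_dvd_of_entrywiseNormLE_smul_toQ hiv hsmall)

/-- Let `ℓ` be odd, `l₁, l₂ ∈ 𝔰𝔩₂(ℤ_ℓ)`, `λ₁, λ₂ ∈ ℤ_ℓ`, and `M` an integral
matrix with nonzero determinant.  Assume (i) `l₂ ≡ M l₁ M⁻¹ (mod ℓ^T)`,
(ii) `tr(l₁²) ≡ tr(l₂²) (mod ℓ^T)`, (iii)
`Θ(l₂²) + 2λ₂ l₂ ≡ M (Θ(l₁²) + 2λ₁ l₁) M⁻¹ (mod ℓ^T)`, and (iv) some entry of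
`l₂` is not divisible by `ℓ`.  Then `λ₁ ≡ λ₂ (mod ℓ^T)`.  (Congruences between
`ℚ_ℓ`-matrices are stated entrywise via the `ℓ`-adic norm.) -/
theorem lambdas_congruent (p : ℕ) [Fact p.Prime] (hp : p ≠ 2) (T : ℕ) (hT : 1 ≤ T)
    (l₁ l₂ : Matrix (Fin 2) (Fin 2) ℤ_[p])
    (hl₁ : Matrix.trace l₁ = 0) (hl₂ : Matrix.trace l₂ = 0)
    (lam₁ lam₂ : ℤ_[p])
    (M : Matrix (Fin 2) (Fin 2) ℤ_[p]) (hM : (toQ p M).det ≠ 0)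
    (hi : ∀ i j, ‖(toQ p l₂ - toQ p M * toQ p l₁ * (toQ p M)⁻¹) i j‖ ≤ (p : ℝ) ^ (-(T : ℤ)))
    (hii : (p : ℤ_[p]) ^ T ∣ (Matrix.trace (l₁ * l₁) - Matrix.trace (l₂ * l₂)))
    (hiii : ∀ i j, ‖((thetaQ p (toQ p l₂ * toQ p l₂) + ((2 * lam₂ : ℤ_[p]) : ℚ_[p]) • toQ p l₂)
        - toQ p M * (thetaQ p (toQ p l₁ * toQ p l₁) + ((2 * lam₁ : ℤ_[p]) : ℚ_[p]) • toQ p l₁)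
            * (toQ p M)⁻¹) i j‖ ≤ (p : ℝ) ^ (-(T : ℤ)))
    (hiv : ∃ i j, ¬ ((p : ℤ_[p]) ∣ l₂ i j)) :
    (p : ℤ_[p]) ^ T ∣ (lam₁ - lam₂) :=
  lambdas_congruent_general p hp T l₁ l₂ lam₁ lam₂ M hM hi hii hiii hiv
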